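/- arXiv:hep-th/9312206 — 4 statements merged into one kernel-verified Lean document; each statement's English description precedes it below -/
import Mathlib

section
/- Noether correspondence (one direction, algebraic form): in the Koszul–Tate complex for equations of motion f_j, the homology group H_1(δ|d) in top form degree is isomorphic to the space of nontrivial conserved currents: classes of vectors (t^j) with Σ_j t^j f_j = ∂_μ j^μ for some current j^μ, modulo currents that are on-shell equal to identically conserved total divergences. -/
/-- Noether correspondence (algebraic form): in a local bicomplex `M p k`
(`p` = form degree, top degree `n = N + 2`; `k` = antighost number) with horizontal
differential `d` and Koszul–Tate differential `δ`, assuming the algebraic Poincaré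
lemma `H^p(d) = 0` for `0 < p < n` and `δ`-acyclicity `H_k(δ) = 0` for `k ≥ 1`,
the map sending a relative cocycle `a₁` (antighost 1, form degree `n`, with
`δ a₁ + d j = 0`) to the conserved current `j` induces a bijection between
`H_1^n(δ|d)` and the space of conserved currents modulo trivial
(`d`-exact-plus-`δ`-exact) currents:
(1) it is well defined (cohomologous cocycles give equivalent currents),
(2) it is injective (a cocycle whose current is trivial is itself trivial), and
(3) it is surjective onto conserved currents (currents whose divergence vanishes
    on-shell, `d j = −δ a₁`). -/
theorem noether_correspondence_H1_delta_mod_d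
    {R : Type*} [CommRing R] (M : ℕ → ℕ → Type*)
    [∀ p k, AddCommGroup (M p k)] [∀ p k, Module R (M p k)]
    (N : ℕ)
    (d : ∀ p k : ℕ, M p k →ₗ[R] M (p + 1) k)
    (δ : ∀ p k : ℕ, M p (k + 1) →ₗ[R] M p k)
    (hd2 : ∀ p k (x : M p k), d (p + 1) k (d p k x) = 0)
    (hδ2 : ∀ p k (x : M p (k + 2)), δ p k (δ p (k + 1) x) = 0)
    (hanti : ∀ p k (x : M p (k + 1)),
      d p k (δ p k x) + δ (p + 1) k (d p (k + 1) x) = 0)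
    (hPoincare : ∀ p k : ℕ, p + 1 < N + 2 →
      ∀ x : M (p + 1) k, d (p + 1) k x = 0 → ∃ y : M p k, d p k y = x)
    (hδac : ∀ p k : ℕ, ∀ x : M p (k + 1),
      δ p k x = 0 → ∃ y : M p (k + 2), δ p (k + 1) y = x) :
    -- (1) well-definedness:
    (∀ (a₁ a₁' : M (N + 2) 1) (j j' : M (N + 1) 0)
        (c : M (N + 2) 2) (e : M (N + 1) 1),
      δ (N + 2) 0 a₁ + d (N + 1) 0 j = 0 →
      δ (N + 2) 0 a₁' + d (N + 1) 0 j' = 0 →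
      a₁ - a₁' = δ (N + 2) 1 c + d (N + 1) 1 e →
      ∃ (S : M N 0) (mcur : M (N + 1) 1),
        j - j' = d N 0 S + δ (N + 1) 0 mcur) ∧
    -- (2) injectivity:
    (∀ (a₁ : M (N + 2) 1) (j : M (N + 1) 0),
      δ (N + 2) 0 a₁ + d (N + 1) 0 j = 0 →
      (∃ (S : M N 0) (mcur : M (N + 1) 1),
        j = d N 0 S + δ (N + 1) 0 mcur) →
      ∃ (c : M (N + 2) 2) (e : M (N + 1) 1),
        a₁ = δ (N + 2) 1 c + d (N + 1) 1 e) ∧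
    -- (3) surjectivity onto conserved currents:
    (∀ j : M (N + 1) 0,
      (∃ a₁ : M (N + 2) 1, d (N + 1) 0 j + δ (N + 2) 0 a₁ = 0) →
      ∃ (a₁ : M (N + 2) 1), δ (N + 2) 0 a₁ + d (N + 1) 0 j = 0) := by
  refine ⟨?_, ?_, ?_⟩
  · intro a₁ a₁' j j' c e h1 h2 h3
    -- apply δ to h3
    have hδ3 : δ (N + 2) 0 a₁ - δ (N + 2) 0 a₁'
        = δ (N + 2) 0 (d (N + 1) 1 e) := by
      have := congrArg (δ (N + 2) 0) h3
      simpa [map_sub, map_add, hδ2 (N + 2) 0 c] using this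
    have hanti' : δ (N + 2) 0 (d (N + 1) 1 e)
        = - d (N + 1) 0 (δ (N + 1) 0 e) :=
      eq_neg_of_add_eq_zero_right (hanti (N + 1) 0 e)
    -- so d (j - j' - δ e) = 0
    have hδa : δ (N + 2) 0 a₁ = - d (N + 1) 0 j :=
      eq_neg_of_add_eq_zero_left h1
    have hδa' : δ (N + 2) 0 a₁' = - d (N + 1) 0 j' :=
      eq_neg_of_add_eq_zero_left h2
    have key : d (N + 1) 0 (δ (N + 1) 0 e)
        = d (N + 1) 0 j - d (N + 1) 0 j' := by
      have h := hδ3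
      rw [hδa, hδa', hanti', neg_sub_neg] at h
      have h2 := neg_eq_iff_eq_neg.mp h.symm
      rwa [neg_sub] at h2
    have hclosed : d (N + 1) 0 (j - j' - δ (N + 1) 0 e) = 0 := by
      simp only [map_sub]
      rw [key]
      abel
    obtain ⟨S, hS⟩ := hPoincare N 0 (by omega) _ hclosed
    exact ⟨S, e, by rw [hS]; abel⟩
  · intro a₁ j h1 ⟨S, m, hj⟩
    -- δ a₁ = -d j = -d(δ m) = δ (d m)
    have hδa : δ (N + 2) 0 a₁ = - d (N + 1) 0 j :=
      eq_neg_of_add_eq_zero_left h1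
    have hanti' : d (N + 1) 0 (δ (N + 1) 0 m)
        = - δ (N + 2) 0 (d (N + 1) 1 m) :=
      eq_neg_of_add_eq_zero_left (hanti (N + 1) 0 m)
    have hcyc : δ (N + 2) 0 (a₁ - d (N + 1) 1 m) = 0 := by
      rw [map_sub, hδa, hj, map_add, hd2 N 0 S, hanti']
      abel
    obtain ⟨c, hc⟩ := hδac (N + 2) 0 _ hcyc
    exact ⟨c, m, by rw [hc]; abel⟩
  · intro j ⟨a₁, ha⟩
    exact ⟨a₁, (add_comm _ _).trans ha⟩
end

section
/- Independence of Lie-cocycle coefficients: if ω^J(C) form a basis of H*(g,k) (represented by invariant cocycles) and a_J ∈ P^g are invariants such that Σ_J a_J ω^J is γ-exact in P ⊗ Λg*, then each a_J = 0, assuming P is a semisimple g-module and g is reductive over a characteristic-zero field. -/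
/-!
Since `P` is a semisimple `g`-module, its invariants `P^g` have a `g`-stable complement `Q`,
and the projection `π` onto `P^g` along `Q` kills every `⁅X, p⁆`. For any linear functional
`f` on `P`, the functional `φ = f ∘ π` is therefore a morphism from `P` to the trivial module
`k`, so it maps the `P`-valued Chevalley–Eilenberg complex to the trivial one by a chain map.
It sends `Σ a_J ω_J` to `Σ f(a_J) ω_J` (as `π` fixes the invariants `a_J`) and a coboundary
`D b` to the coboundary `Dtriv (φ ∘ b)`, so independence of the classes of the `ω_J` forces
`f(a_J) = 0` for every `f`, i.e. `a_J = 0`.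
-/

namespace AlternatingMap

variable {R M N ι : Type*} [Semiring R] [AddCommMonoid M] [Module R M] [AddCommMonoid N]
  [Module R N]

instance instIsZeroApply : IsZeroApply (M [⋀^ι]→ₗ[R] N) (ι → M) N := ⟨fun _ => rfl⟩

instance instIsAddApply : IsAddApply (M [⋀^ι]→ₗ[R] N) (ι → M) N := ⟨fun _ _ _ => rfl⟩

end AlternatingMap

namespace LinearMap

variable {R M V ι κ : Type*} [CommSemiring R] [AddCommMonoid M] [Module R M] [AddCommMonoid V]
  [Module R V]

theorem compAlternatingMap_sum_toSpanSingleton_compAlternatingMap (φ : M →ₗ[R] R)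
    (s : Finset κ) (a : κ → M) (ω : κ → V [⋀^ι]→ₗ[R] R) :
    φ.compAlternatingMap (∑ J ∈ s, (toSpanSingleton R M (a J)).compAlternatingMap (ω J)) =
      ∑ J ∈ s, φ (a J) • ω J := by
  ext x
  simp [mul_comm]

end LinearMap

namespace LieModule

variable {R L M : Type*} [CommRing R] [LieRing L] [LieAlgebra R L] [AddCommGroup M] [Module R M]
  [LieRingModule L M] [LieModule R L M]

theorem exists_projection_maxTrivSubmodule {Q : LieSubmodule R L M}
    (hQ : IsCompl (maxTrivSubmodule R L M) Q) :
    ∃ π : M →ₗ[R] M,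
      (∀ m ∈ maxTrivSubmodule R L M, π m = m) ∧ ∀ (x : L) (m : M), π ⁅x, m⁆ = 0 := by
  have hc := LieSubmodule.isCompl_toSubmodule.mpr hQ
  refine ⟨Submodule.projection _ _ hc, fun m hm => Submodule.projection_apply_of_mem_left hc hm,
    fun x m => Submodule.projection_apply_of_mem_right hc ?_⟩
  obtain ⟨u, hu, v, hv, rfl⟩ :=
    Submodule.mem_sup.mp (hc.sup_eq_top ▸ Submodule.mem_top (x := m))
  rw [lie_add, (mem_maxTrivSubmodule R L M u).mp hu x, zero_add]
  exact Q.lie_mem hv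

end LieModule

namespace LinearMap

variable {R L M N : Type*} [CommRing R] [LieRing L] [LieAlgebra R L] [AddCommGroup M] [Module R M]
  [LieRingModule L M] [AddCommGroup N] [Module R N]

/-- A linear map killing the action of `L` on `M` is a chain map from the Chevalley–Eilenberg
complex with coefficients in `M` to the one with trivial coefficients in `N`. -/
theorem compAlternatingMap_ceDifferential {q : ℕ}
    {D : (L [⋀^Fin q]→ₗ[R] M) → (L [⋀^Fin (q + 1)]→ₗ[R] M)}
    {Dtriv : (L [⋀^Fin q]→ₗ[R] N) → (L [⋀^Fin (q + 1)]→ₗ[R] N)}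
    (hD : ∀ (c : L [⋀^Fin q]→ₗ[R] M) (x : Fin (q + 1) → L),
      D c x =
        (∑ i : Fin (q + 1), ((-1 : R) ^ (i : ℕ)) • ⁅x i, c (i.removeNth x)⁆) +
        ∑ j : Fin (q + 1), ∑ i ∈ Finset.Iio j,
          ((-1 : R) ^ (j : ℕ)) • c (j.removeNth (Function.update x i ⁅x i, x j⁆)))
    (hDtriv : ∀ (ω : L [⋀^Fin q]→ₗ[R] N) (x : Fin (q + 1) → L),
      Dtriv ω x =
        ∑ j : Fin (q + 1), ∑ i ∈ Finset.Iio j,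
          ((-1 : R) ^ (j : ℕ)) • ω (j.removeNth (Function.update x i ⁅x i, x j⁆)))
    (φ : M →ₗ[R] N) (hφ : ∀ (x : L) (m : M), φ ⁅x, m⁆ = 0) (c : L [⋀^Fin q]→ₗ[R] M) :
    φ.compAlternatingMap (D c) = Dtriv (φ.compAlternatingMap c) := by
  ext x
  rw [compAlternatingMap_apply, hD, hDtriv]
  simp [hφ]

end LinearMap

theorem CE_invariant_coefficients_independence_general
    (k : Type*) [Field k]
    (g : Type*) [LieRing g] [LieAlgebra k g]
    (P : Type*) [CommRing P] [Algebra k P] [LieRingModule g P] [LieModule k g P]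
    (hss : ∀ Q : LieSubmodule k g P, ∃ Q' : LieSubmodule k g P, IsCompl Q Q')
    (D : ∀ q : ℕ, (g [⋀^Fin q]→ₗ[k] P) → (g [⋀^Fin (q + 1)]→ₗ[k] P))
    (hD : ∀ (q : ℕ) (c : g [⋀^Fin q]→ₗ[k] P) (x : Fin (q + 1) → g),
      D q c x =
        (∑ i : Fin (q + 1), ((-1 : k) ^ (i : ℕ)) • ⁅x i, c (i.removeNth x)⁆) +
        ∑ j : Fin (q + 1), ∑ i ∈ Finset.Iio j,
          ((-1 : k) ^ (j : ℕ)) •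
            c (j.removeNth (Function.update x i ⁅x i, x j⁆)))
    (Dtriv : ∀ q : ℕ, (g [⋀^Fin q]→ₗ[k] k) → (g [⋀^Fin (q + 1)]→ₗ[k] k))
    (hDtriv : ∀ (q : ℕ) (ω : g [⋀^Fin q]→ₗ[k] k) (x : Fin (q + 1) → g),
      Dtriv q ω x =
        ∑ j : Fin (q + 1), ∑ i ∈ Finset.Iio j,
          ((-1 : k) ^ (j : ℕ)) •
            ω (j.removeNth (Function.update x i ⁅x i, x j⁆))) :
    -- degree 0 case: `γ`-exact means zero, independence means linear independence:
    (∀ (nJ : ℕ) (a : Fin nJ → P) (ω : Fin nJ → (g [⋀^Fin 0]→ₗ[k] k)),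
      (∀ J (X : g), ⁅X, a J⁆ = 0) →
      (∀ J, Dtriv 0 (ω J) = 0) →
      (∀ coef : Fin nJ → k, ∑ J, coef J • ω J = 0 → ∀ J, coef J = 0) →
      (∑ J, (LinearMap.toSpanSingleton k P (a J)).compAlternatingMap (ω J)) = 0 →
      ∀ J, a J = 0) ∧
    -- positive degree case:
    (∀ (q nJ : ℕ) (a : Fin nJ → P) (ω : Fin nJ → (g [⋀^Fin (q + 1)]→ₗ[k] k)),
      (∀ J (X : g), ⁅X, a J⁆ = 0) →
      (∀ J, Dtriv (q + 1) (ω J) = 0) →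
      -- the classes of the `ω_J` in `H^{q+1}(g,k)` are linearly independent:
      (∀ coef : Fin nJ → k,
        (∃ β : g [⋀^Fin q]→ₗ[k] k, ∑ J, coef J • ω J = Dtriv q β) →
        ∀ J, coef J = 0) →
      -- `Σ_J a_J • ω_J` is `γ`-exact in the `P`-valued complex:
      (∃ b : g [⋀^Fin q]→ₗ[k] P,
        (∑ J, (LinearMap.toSpanSingleton k P (a J)).compAlternatingMap (ω J))
          = D q b) →
      ∀ J, a J = 0) := by
  constructor
  · intro nJ a ω _ _ hindep hsum J
    rw [← Module.forall_dual_apply_eq_zero_iff k]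
    intro f
    refine hindep (fun J => f (a J)) ?_ J
    rw [← f.compAlternatingMap_sum_toSpanSingleton_compAlternatingMap, hsum,
      LinearMap.compAlternatingMap_zero]
  · rintro q nJ a ω hinv - hindep ⟨b, hb⟩ J
    obtain ⟨Q, hQ⟩ := hss (LieModule.maxTrivSubmodule k g P)
    obtain ⟨π, hπ_inv, hπ_lie⟩ := LieModule.exists_projection_maxTrivSubmodule hQ
    rw [← Module.forall_dual_apply_eq_zero_iff k]
    intro f
    have hφa : ∀ J, (f ∘ₗ π) (a J) = f (a J) := fun J =>
      congrArg f (hπ_inv _ ((LieModule.mem_maxTrivSubmodule k g P _).mpr (hinv J)))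
    have hφ_lie : ∀ (X : g) (p : P), (f ∘ₗ π) ⁅X, p⁆ = 0 := fun X p => by
      rw [LinearMap.comp_apply, hπ_lie, map_zero]
    refine hindep (fun J => f (a J)) ⟨(f ∘ₗ π).compAlternatingMap b, ?_⟩ J
    rw [← LinearMap.compAlternatingMap_ceDifferential (hD q) (hDtriv q) _ hφ_lie, ← hb,
      LinearMap.compAlternatingMap_sum_toSpanSingleton_compAlternatingMap]
    simp only [hφa]

/-- Independence of Lie-cocycle coefficients.  Same Chevalley–Eilenberg setup as for the
structure theorem: `g` finite-dimensional reductive over a field `k` of characteristic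
zero, acting by derivations on a commutative algebra `P` which is semisimple as a
`g`-module.  If the `ω_J` are trivial-coefficient cocycles whose classes in `H*(g,k)`
are linearly independent, and `a_J ∈ P^g` are invariants such that `Σ_J a_J • ω_J` is a
coboundary (is zero, in degree 0) in the `P`-valued complex, then every `a_J = 0`:
the map `P^g ⊗ H*(g,k) → H*(g,P)` is injective. -/
theorem CE_invariant_coefficients_independence
    (k : Type*) [Field k] [CharZero k]
    (g : Type*) [LieRing g] [LieAlgebra k g] [FiniteDimensional k g]
    (P : Type*) [CommRing P] [Algebra k P] [LieRingModule g P] [LieModule k g P]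
    (hred : ∀ I : LieIdeal k g, ∃ I' : LieIdeal k g, IsCompl I I')
    (hder : ∀ (X : g) (a b : P), ⁅X, a * b⁆ = ⁅X, a⁆ * b + a * ⁅X, b⁆)
    (hss : ∀ Q : LieSubmodule k g P, ∃ Q' : LieSubmodule k g P, IsCompl Q Q')
    (D : ∀ q : ℕ, (g [⋀^Fin q]→ₗ[k] P) → (g [⋀^Fin (q + 1)]→ₗ[k] P))
    (hD : ∀ (q : ℕ) (c : g [⋀^Fin q]→ₗ[k] P) (x : Fin (q + 1) → g),
      D q c x =
        (∑ i : Fin (q + 1), ((-1 : k) ^ (i : ℕ)) • ⁅x i, c (i.removeNth x)⁆) +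
        ∑ j : Fin (q + 1), ∑ i ∈ Finset.Iio j,
          ((-1 : k) ^ (j : ℕ)) •
            c (j.removeNth (Function.update x i ⁅x i, x j⁆)))
    (Dtriv : ∀ q : ℕ, (g [⋀^Fin q]→ₗ[k] k) → (g [⋀^Fin (q + 1)]→ₗ[k] k))
    (hDtriv : ∀ (q : ℕ) (ω : g [⋀^Fin q]→ₗ[k] k) (x : Fin (q + 1) → g),
      Dtriv q ω x =
        ∑ j : Fin (q + 1), ∑ i ∈ Finset.Iio j,
          ((-1 : k) ^ (j : ℕ)) •
            ω (j.removeNth (Function.update x i ⁅x i, x j⁆))) :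
    -- degree 0 case: `γ`-exact means zero, independence means linear independence:
    (∀ (nJ : ℕ) (a : Fin nJ → P) (ω : Fin nJ → (g [⋀^Fin 0]→ₗ[k] k)),
      (∀ J (X : g), ⁅X, a J⁆ = 0) →
      (∀ J, Dtriv 0 (ω J) = 0) →
      (∀ coef : Fin nJ → k, ∑ J, coef J • ω J = 0 → ∀ J, coef J = 0) →
      (∑ J, (LinearMap.toSpanSingleton k P (a J)).compAlternatingMap (ω J)) = 0 →
      ∀ J, a J = 0) ∧
    -- positive degree case:
    (∀ (q nJ : ℕ) (a : Fin nJ → P) (ω : Fin nJ → (g [⋀^Fin (q + 1)]→ₗ[k] k)),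
      (∀ J (X : g), ⁅X, a J⁆ = 0) →
      (∀ J, Dtriv (q + 1) (ω J) = 0) →
      -- the classes of the `ω_J` in `H^{q+1}(g,k)` are linearly independent:
      (∀ coef : Fin nJ → k,
        (∃ β : g [⋀^Fin q]→ₗ[k] k, ∑ J, coef J • ω J = Dtriv q β) →
        ∀ J, coef J = 0) →
      -- `Σ_J a_J • ω_J` is `γ`-exact in the `P`-valued complex:
      (∃ b : g [⋀^Fin q]→ₗ[k] P,
        (∑ J, (LinearMap.toSpanSingleton k P (a J)).compAlternatingMap (ω J))
          = D q b) →
      ∀ J, a J = 0) :=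
  CE_invariant_coefficients_independence_general k g P hss D hD Dtriv hDtriv
end

section
/- Triviality criterion for the solutions: the antifield-dependent cocycle A = ∫(j^μ A_μ + antifield terms)·(ghost) built from a conserved current j^μ is s-exact (modulo d) if and only if the current j is trivial, i.e., on-shell equal to an identically conserved total divergence (j^μ ≈ ∂_ν S^{νμ} with S antisymmetric). -/
/-- Triviality criterion for the current-type solutions: in the local bicomplex `M p k`
(form degree `p`, top degree `n = N + 2`; antighost number `k`) with Koszul–Tate
differential `δ` and horizontal differential `d`, assuming `δ`-acyclicity in positive
antighost number and the algebraic Poincaré lemma, a class of `H_1^n(δ|d)` represented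
by `a₁` (antighost 1, form degree `n`) with associated conserved current `j`
(`δ a₁ + d j = 0`) vanishes — i.e. `a₁ = δ c + d e` — if and only if the current is
trivial, i.e. on-shell equal to an identically conserved total divergence:
`j = d S + δ m`. -/
theorem current_solution_trivial_iff_current_trivial
    {R : Type*} [CommRing R] (M : ℕ → ℕ → Type*)
    [∀ p k, AddCommGroup (M p k)] [∀ p k, Module R (M p k)]
    (N : ℕ)
    (d : ∀ p k : ℕ, M p k →ₗ[R] M (p + 1) k)
    (δ : ∀ p k : ℕ, M p (k + 1) →ₗ[R] M p k)
    (hd2 : ∀ p k (x : M p k), d (p + 1) k (d p k x) = 0)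
    (hδ2 : ∀ p k (x : M p (k + 2)), δ p k (δ p (k + 1) x) = 0)
    (hanti : ∀ p k (x : M p (k + 1)),
      d p k (δ p k x) + δ (p + 1) k (d p (k + 1) x) = 0)
    (hPoincare : ∀ p k : ℕ, p + 1 < N + 2 →
      ∀ x : M (p + 1) k, d (p + 1) k x = 0 → ∃ y : M p k, d p k y = x)
    (hδac : ∀ p k : ℕ, ∀ x : M p (k + 1),
      δ p k x = 0 → ∃ y : M p (k + 2), δ p (k + 1) y = x)
    (a₁ : M (N + 2) 1) (j : M (N + 1) 0)
    (hconserved : δ (N + 2) 0 a₁ + d (N + 1) 0 j = 0) :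
    (∃ (c : M (N + 2) 2) (e : M (N + 1) 1),
        a₁ = δ (N + 2) 1 c + d (N + 1) 1 e) ↔
    (∃ (S : M N 0) (m : M (N + 1) 1), j = d N 0 S + δ (N + 1) 0 m) := by
  constructor
  · rintro ⟨c, e, rfl⟩
    have e1 : δ (N + 2) 0 (δ (N + 2) 1 c) = 0 := hδ2 _ _ c
    have e2 := hanti (N + 1) 0 e
    have e3 : δ (N + 2) 0 (d (N + 1) 1 e) = - d (N + 1) 0 (δ (N + 1) 0 e) :=
      eq_neg_of_add_eq_zero_right e2
    have key : d (N + 1) 0 j = d (N + 1) 0 (δ (N + 1) 0 e) := by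
      simp only [map_add, e1, zero_add, e3, neg_add_eq_zero] at hconserved
      exact hconserved.symm
    obtain ⟨S, hS⟩ := hPoincare N 0 (by omega) (j - δ (N + 1) 0 e)
      (by rw [map_sub, key, sub_self])
    exact ⟨S, e, by rw [hS]; abel⟩
  · rintro ⟨S, m, rfl⟩
    have f1 : d (N + 1) 0 (d N 0 S) = 0 := hd2 _ _ S
    have f2 := hanti (N + 1) 0 m
    have f3 : d (N + 1) 0 (δ (N + 1) 0 m) = - δ (N + 2) 0 (d (N + 1) 1 m) :=
      eq_neg_of_add_eq_zero_left f2
    have key : δ (N + 2) 0 (a₁ - d (N + 1) 1 m) = 0 := by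
      simp only [map_add, f1, zero_add, f3, add_neg_eq_zero] at hconserved
      rw [map_sub, hconserved, sub_self]
    obtain ⟨c, hc⟩ := hδac (N + 2) 0 _ key
    exact ⟨c, m, by rw [hc]; abel⟩
end

section
/- Chain elimination step: suppose a = a_0 + ... + a_k solves s a + d b = 0 in the expansion by antighost number with k ≥ 2, and suppose the top component satisfies a_k = δ p + d q with γp = γq = 0. Then there exist redefinitions a → a − s(p) − d(q) and b → b' yielding an equivalent solution whose expansion stops at antighost number k − 1. -/
/-- Chain elimination step.  In the bicomplex `M p i` (form degree `p`, top degree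
`n = N + 1`; antighost number `i`) with `s = δ + γ`, where `δ` has antighost degree `−1`,
`γ` has antighost degree `0`, and both anticommute with `d`, suppose
`a = a_0 + ⋯ + a_k` (components `a i` of antighost number `i`, vanishing for `i > k`,
with `k ≥ 2`) solves `s a + d b = 0`, i.e. componentwise
`δ a_{i+1} + γ a_i + d b_i = 0`.  If the top component satisfies `a_k = δ p + d q` with
`γ p = 0` and `γ q = 0`, then the redefinition `a ↦ a − s p − d q` (which changes only
the antighost-`k` component, cancelling it) together with a suitable `b ↦ b'` yields an
equivalent solution whose expansion stops at antighost number `k − 1`. -/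
theorem chain_elimination_step
    {R : Type*} [CommRing R] (M : ℕ → ℕ → Type*)
    [∀ p i, AddCommGroup (M p i)] [∀ p i, Module R (M p i)]
    (N : ℕ)
    (d : ∀ p i : ℕ, M p i →ₗ[R] M (p + 1) i)
    (δ : ∀ p i : ℕ, M p (i + 1) →ₗ[R] M p i)
    (γ : ∀ p i : ℕ, M p i →ₗ[R] M p i)
    (hd2 : ∀ p i (x : M p i), d (p + 1) i (d p i x) = 0)
    (hδ2 : ∀ p i (x : M p (i + 2)), δ p i (δ p (i + 1) x) = 0)
    (hγ2 : ∀ p i (x : M p i), γ p i (γ p i x) = 0)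
    (hδγ : ∀ p i (x : M p (i + 1)), δ p i (γ p (i + 1) x) + γ p i (δ p i x) = 0)
    (hdγ : ∀ p i (x : M p i), d p i (γ p i x) + γ (p + 1) i (d p i x) = 0)
    (hdδ : ∀ p i (x : M p (i + 1)), d p i (δ p i x) + δ (p + 1) i (d p (i + 1) x) = 0)
    (k : ℕ) (hk : 2 ≤ k)
    (a : ∀ i : ℕ, M (N + 1) i) (b : ∀ i : ℕ, M N i)
    (htop : ∀ i : ℕ, k < i → a i = 0)
    (hcocycle : ∀ i : ℕ,
      δ (N + 1) i (a (i + 1)) + γ (N + 1) i (a i) + d N i (b i) = 0)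
    (p : M (N + 1) (k + 1)) (q : M N k)
    (hak : a k = δ (N + 1) k p + d N k q)
    (hγp : γ (N + 1) (k + 1) p = 0) (hγq : γ N k q = 0) :
    ∃ (a' : ∀ i : ℕ, M (N + 1) i) (b' : ∀ i : ℕ, M N i),
      -- the redefinition subtracts `s p + d q`, which only changes `a k`:
      (∀ i : ℕ, i ≠ k → a' i = a i) ∧
      a' k = a k - δ (N + 1) k p - d N k q ∧
      -- the new expansion stops at antighost number `k − 1`:
      (∀ i : ℕ, k ≤ i → a' i = 0) ∧
      -- and it is again a solution of `s a' + d b' = 0`: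
      (∀ i : ℕ,
        δ (N + 1) i (a' (i + 1)) + γ (N + 1) i (a' i) + d N i (b' i) = 0) := by

  obtain ⟨m, rfl⟩ : ∃ m, k = m + 2 := ⟨k - 2, by omega⟩
  refine ⟨fun i => if i = m + 2 then 0 else a i,
    Function.update (fun i => if m + 2 ≤ i then (0 : M N i) else b i) (m + 1)
      (b (m + 1) - δ N (m + 1) q), ?_, ?_, ?_, ?_⟩
  · intro i hi; simp [hi]
  · show (if m + 2 = m + 2 then (0 : M (N + 1) (m + 2)) else a (m + 2)) = _
    rw [if_pos rfl, hak]; abel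
  · intro i hi
    rcases eq_or_lt_of_le hi with h | h
    · simp [← h]
    · simp only [if_neg (by omega : i ≠ m + 2)]
      exact htop i h
  · intro i
    rcases lt_trichotomy i (m + 1) with h | h | h
    · simp only [if_neg (by omega : i + 1 ≠ m + 2), if_neg (by omega : i ≠ m + 2),
        Function.update_of_ne (by omega : i ≠ m + 1), if_neg (by omega : ¬ m + 2 ≤ i)]
      exact hcocycle i
    · subst h
      simp only [Function.update_self, map_sub]
      simp only [if_true, if_neg (show ¬ m + 1 = m + 2 by omega), map_zero, zero_add]
      have h1 : δ (N + 1) (m + 1) (a (m + 2)) + γ (N + 1) (m + 1) (a (m + 1)) +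
          d N (m + 1) (b (m + 1)) = 0 := hcocycle (m + 1)
      rw [hak, map_add, hδ2, zero_add] at h1
      have h2 : d N (m + 1) (δ N (m + 1) q) + δ (N + 1) (m + 1) (d N (m + 2) q) = 0 :=
        hdδ N (m + 1) q
      rw [eq_neg_of_add_eq_zero_left h2, sub_neg_eq_add]
      calc γ (N + 1) (m + 1) (a (m + 1)) +
            (d N (m + 1) (b (m + 1)) + δ (N + 1) (m + 1) (d N (m + 2) q))
          = δ (N + 1) (m + 1) (d N (m + 2) q) + γ (N + 1) (m + 1) (a (m + 1)) +
            d N (m + 1) (b (m + 1)) := by abel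
        _ = 0 := h1
    · have hi1 : i + 1 ≠ m + 2 := by omega
      have hi2 : m + 2 < i + 1 := by omega
      simp only [if_neg hi1, htop (i + 1) hi2, map_zero, zero_add,
        Function.update_of_ne (by omega : i ≠ m + 1), if_pos (by omega : m + 2 ≤ i), map_zero]
      rcases eq_or_lt_of_le (by omega : m + 2 ≤ i) with h' | h'
      · simp [← h']
      · simp [if_neg (by omega : i ≠ m + 2), htop i h']
end
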